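/- Σ_{x ∈ 𝔽_q^{2n}} Σ_{x₀ ∈ 𝔽_q} ψ(Q_n(x) + (1/2)x₀²) = q^{n+1}. (Equivalently, the normalized Gauss sum 𝔫(𝐪) of the combined (2n+1)-dimensional form arising from the affine generic stratum of the odd special orthogonal group SO_{2n+1} equals 1.) -/
import Mathlib


open Finset

/-- Extract the `k`-th coordinate (with 1-based subscripts `1 ≤ k ≤ N`) of a
vector `x ∈ K^N`, returning `0` for out-of-range subscripts. -/
def coordFn {K : Type*} [Zero K] (N : ℕ) (x : Fin N → K) (k : ℕ) : K :=
  if hk : 1 ≤ k ∧ k ≤ N then x ⟨k - 1, by omega⟩ else 0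

/-- The symmetric bilinear form `h_n` on `K^{2n}` attached to the affine generic
stratum of a ramified even special orthogonal group `SO_{2n}`. -/
def hSO {K : Type*} [Field K] (n : ℕ) (x y : Fin (2 * n) → K) : K :=
  let X := coordFn (2 * n) x
  let Y := coordFn (2 * n) y
  (2 : K)⁻¹ *
    ((X n - X (2 * n)) * Y 1 + (X 1 - X n) * Y n
      + (X (n + 2) - X (n + 1)) * Y (n + 1) + (X (n + 1) - X (n - 1)) * Y (n + 2)
      + ∑ i ∈ Finset.Icc 2 (n - 1), (X (2 * n + 2 - i) - X (2 * n + 1 - i)) * Y i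
      + ∑ i ∈ Finset.Icc (n + 3) (2 * n), (X (2 * n + 2 - i) - X (2 * n + 1 - i)) * Y i)

section Aux

variable {F : Type} [Field F]

/-- The substituted coordinate function (0-based index `j`). -/
def xfAux (n : ℕ) (a b : ℕ → F) (u w : F) (j : ℕ) : F :=
  if j < n - 1 then a j + w
  else if j = n - 1 then u + w
  else if j = n then w
  else u + w - ∑ i ∈ Finset.range (2 * n - j), b i

/-- The substituted vector. -/
def xvAux (n : ℕ) (a b : ℕ → F) (u w : F) : Fin (2 * n) → F :=
  fun j => xfAux n a b u w j.val

lemma xfAux_lt {n j : ℕ} (a b : ℕ → F) (u w : F) (hj : j < n - 1) :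
    xfAux n a b u w j = a j + w := if_pos hj

lemma xfAux_nm1 {n : ℕ} (a b : ℕ → F) (u w : F) :
    xfAux n a b u w (n - 1) = u + w := by
  unfold xfAux
  rw [if_neg (lt_irrefl _), if_pos rfl]

lemma xfAux_n {n : ℕ} (hn : 1 ≤ n) (a b : ℕ → F) (u w : F) :
    xfAux n a b u w n = w := by
  unfold xfAux
  rw [if_neg (by omega), if_neg (by omega), if_pos rfl]

lemma xfAux_hi {n j : ℕ} (hj : n < j) (a b : ℕ → F) (u w : F) :
    xfAux n a b u w j = u + w - ∑ i ∈ Finset.range (2 * n - j), b i := by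
  unfold xfAux
  rw [if_neg (by omega), if_neg (by omega), if_neg (by omega)]

lemma coordFn_xvAux {n k : ℕ} (hk1 : 1 ≤ k) (hk2 : k ≤ 2 * n) (a b : ℕ → F) (u w : F) :
    coordFn (2 * n) (xvAux n a b u w) k = xfAux n a b u w (k - 1) := by
  rw [coordFn, dif_pos ⟨hk1, hk2⟩]; rfl

/-- The purely algebraic identity, proved by induction. -/
lemma algAux (a b : ℕ → F) (u w : F) : ∀ m : ℕ,
    (u + w - (u + w - b 0)) * (a 0 + w) + ((a 0 + w) - (u + w)) * (u + w)
      + ((u + w - ∑ i ∈ Finset.range (m + 1), b i) - w) * w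
      + (w - (a m + w)) * (u + w - ∑ i ∈ Finset.range (m + 1), b i)
      + ∑ j ∈ Finset.range m, b (j + 1) * (a (j + 1) + w)
      + ∑ j ∈ Finset.range m,
          (a (j + 1) - a j) * (u + w - ∑ i ∈ Finset.range (j + 1), b i)
    = 2 * (∑ k ∈ Finset.range (m + 1), a k * b k) - u ^ 2
  | 0 => by
      simp only [zero_add, Finset.sum_range_one, Finset.sum_range_zero, Finset.range_zero,
        Finset.sum_empty, add_zero]
      ring
  | m + 1 => by
      have ih := algAux a b u w m
      simp only [Finset.sum_range_succ] at ih ⊢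
      linear_combination ih

/-- Key identity: value of the quadratic form after the substitution. -/
lemma keyQ {n : ℕ} (hn : 2 ≤ n) (h2 : (2 : F) ≠ 0) (a b : ℕ → F) (u w : F) :
    hSO n (xvAux n a b u w) (xvAux n a b u w)
      = (∑ k ∈ Finset.range (n - 1), a k * b k) - (2 : F)⁻¹ * u ^ 2 := by
  have e1 : coordFn (2 * n) (xvAux n a b u w) 1 = a 0 + w := by
    rw [coordFn_xvAux (by omega) (by omega)]
    exact xfAux_lt a b u w (by omega)
  have en : coordFn (2 * n) (xvAux n a b u w) n = u + w := by
    rw [coordFn_xvAux (by omega) (by omega)]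
    exact xfAux_nm1 a b u w
  have e2n : coordFn (2 * n) (xvAux n a b u w) (2 * n) = u + w - b 0 := by
    rw [coordFn_xvAux (by omega) (by omega), xfAux_hi (by omega),
      show 2 * n - (2 * n - 1) = 1 by omega, Finset.sum_range_one]
  have en1 : coordFn (2 * n) (xvAux n a b u w) (n + 1) = w := by
    rw [coordFn_xvAux (by omega) (by omega), show n + 1 - 1 = n from rfl,
      xfAux_n (by omega)]
  have en2 : coordFn (2 * n) (xvAux n a b u w) (n + 2)
      = u + w - ∑ i ∈ Finset.range (n - 2 + 1), b i := by
    rw [coordFn_xvAux (by omega) (by omega), show n + 2 - 1 = n + 1 from rfl,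
      xfAux_hi (by omega), show 2 * n - (n + 1) = n - 2 + 1 by omega]
  have enm1 : coordFn (2 * n) (xvAux n a b u w) (n - 1) = a (n - 2) + w := by
    rw [coordFn_xvAux (by omega) (by omega), show n - 1 - 1 = n - 2 by omega]
    exact xfAux_lt a b u w (by omega)
  have hs1 : ∑ i ∈ Finset.Icc 2 (n - 1),
      (coordFn (2 * n) (xvAux n a b u w) (2 * n + 2 - i)
        - coordFn (2 * n) (xvAux n a b u w) (2 * n + 1 - i))
        * coordFn (2 * n) (xvAux n a b u w) i
      = ∑ j ∈ Finset.range (n - 2), b (j + 1) * (a (j + 1) + w) := by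
    rw [show Finset.Icc 2 (n - 1) = Finset.Ico 2 (n - 1 + 1) from (Finset.Ico_add_one_right_eq_Icc _ _).symm,
      Finset.sum_Ico_eq_sum_range, show n - 1 + 1 - 2 = n - 2 by omega]
    refine Finset.sum_congr rfl fun j hj => ?_
    have hj' : j < n - 2 := Finset.mem_range.mp hj
    rw [coordFn_xvAux (by omega) (by omega), coordFn_xvAux (by omega) (by omega),
      coordFn_xvAux (by omega) (by omega),
      show 2 * n + 2 - (2 + j) - 1 = 2 * n - 1 - j by omega,
      show 2 * n + 1 - (2 + j) - 1 = 2 * n - 2 - j by omega,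
      show 2 + j - 1 = j + 1 by omega,
      xfAux_hi (by omega), xfAux_hi (by omega), xfAux_lt a b u w (by omega),
      show 2 * n - (2 * n - 1 - j) = j + 1 by omega,
      show 2 * n - (2 * n - 2 - j) = j + 1 + 1 by omega,
      Finset.sum_range_succ (f := b) (n := j + 1)]
    ring
  have hs2 : ∑ i ∈ Finset.Icc (n + 3) (2 * n),
      (coordFn (2 * n) (xvAux n a b u w) (2 * n + 2 - i)
        - coordFn (2 * n) (xvAux n a b u w) (2 * n + 1 - i))
        * coordFn (2 * n) (xvAux n a b u w) i
      = ∑ j ∈ Finset.range (n - 2),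
          (a (j + 1) - a j) * (u + w - ∑ i ∈ Finset.range (j + 1), b i) := by
    rw [show Finset.Icc (n + 3) (2 * n) = Finset.Ico (n + 3) (2 * n + 1) from
        (Finset.Ico_add_one_right_eq_Icc _ _).symm,
      Finset.sum_Ico_eq_sum_range, show 2 * n + 1 - (n + 3) = n - 2 by omega]
    conv_rhs => rw [← Finset.sum_range_reflect]
    refine Finset.sum_congr rfl fun j hj => ?_
    have hj' : j < n - 2 := Finset.mem_range.mp hj
    rw [coordFn_xvAux (by omega) (by omega), coordFn_xvAux (by omega) (by omega),
      coordFn_xvAux (by omega) (by omega),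
      show 2 * n + 2 - (n + 3 + j) - 1 = n - 2 - j by omega,
      show 2 * n + 1 - (n + 3 + j) - 1 = n - 3 - j by omega,
      show n + 3 + j - 1 = n + 2 + j by omega,
      xfAux_lt a b u w (by omega), xfAux_lt a b u w (by omega), xfAux_hi (by omega),
      show 2 * n - (n + 2 + j) = n - 2 - j by omega,
      show n - 2 - 1 - j = n - 3 - j by omega,
      show n - 3 - j + 1 = n - 2 - j by omega]
    ring
  simp only [hSO]
  rw [e1, en, e2n, en1, en2, enm1, hs1, hs2,
    show n - 1 = n - 2 + 1 by omega, algAux a b u w (n - 2)]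
  field_simp

/-- Extend a `Fin m`-indexed vector to `ℕ` by zero. -/
def extFn (m : ℕ) (A : Fin m → F) : ℕ → F :=
  fun j => if h : j < m then A ⟨j, h⟩ else 0

/-- The packing map realizing the change of variables. -/
def packFn (n : ℕ) (p : (Fin (n - 1) → F) × (Fin (n - 1) → F) × F × F × F) :
    (Fin (2 * n) → F) × F :=
  (xvAux n (extFn (n - 1) p.1) (extFn (n - 1) p.2.1)
      (p.2.2.2.2 - p.2.2.1 * (2 : F)⁻¹) p.2.2.2.1,
   p.2.2.2.2 + p.2.2.1 * (2 : F)⁻¹)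

lemma packFn_inj {n : ℕ} (hn : 2 ≤ n) (h2 : (2 : F) ≠ 0) :
    Function.Injective (packFn (F := F) n) := by
  have h2i : (2 : F) * (2 : F)⁻¹ = 1 := mul_inv_cancel₀ h2
  rintro ⟨A, B, s, w, t⟩ ⟨A', B', s', w', t'⟩ h
  rw [Prod.ext_iff] at h
  obtain ⟨h1, h0⟩ := h
  simp only [packFn] at h1 h0
  have hfun : ∀ j : ℕ, j < 2 * n →
      xfAux n (extFn (n - 1) A) (extFn (n - 1) B) (t - s * (2 : F)⁻¹) w j
        = xfAux n (extFn (n - 1) A') (extFn (n - 1) B') (t' - s' * (2 : F)⁻¹) w' j :=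
    fun j hj => congrFun h1 ⟨j, hj⟩
  have hw : w = w' := by
    have := hfun n (by omega)
    rwa [xfAux_n (by omega), xfAux_n (by omega)] at this
  have hu : t - s * (2 : F)⁻¹ = t' - s' * (2 : F)⁻¹ := by
    have := hfun (n - 1) (by omega)
    rw [xfAux_nm1, xfAux_nm1] at this
    linear_combination this - hw
  have ht : t = t' := by
    have h2t : 2 * t = 2 * t' := by linear_combination h0 + hu
    exact mul_left_cancel₀ h2 h2t
  have hs : s = s' := by
    have h2s : s * (2 : F)⁻¹ * 2 = s' * (2 : F)⁻¹ * 2 := by linear_combination 2 * h0 - 2 * ht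
    have : s * ((2 : F) * (2 : F)⁻¹) = s' * ((2 : F) * (2 : F)⁻¹) := by linear_combination h2s
    rwa [h2i, mul_one, mul_one] at this
  have hA : A = A' := by
    funext j
    have := hfun j.val (by omega)
    rw [xfAux_lt _ _ _ _ (by omega), xfAux_lt _ _ _ _ (by omega)] at this
    have hAj : extFn (n - 1) A j.val = extFn (n - 1) A' j.val := by
      linear_combination this - hw
    rwa [extFn, extFn, dif_pos j.isLt, dif_pos j.isLt] at hAj
  have hS : ∀ r : ℕ, r ≤ n - 1 →
      ∑ i ∈ Finset.range r, extFn (n - 1) B i = ∑ i ∈ Finset.range r, extFn (n - 1) B' i := by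
    intro r hr
    match r with
    | 0 => simp
    | r0 + 1 =>
      have := hfun (2 * n - (r0 + 1)) (by omega)
      rw [xfAux_hi (by omega), xfAux_hi (by omega),
        show 2 * n - (2 * n - (r0 + 1)) = r0 + 1 by omega] at this
      linear_combination hu + hw - this
  have hB : B = B' := by
    funext k
    have e1 := hS (k.val + 1) (by omega)
    have e2 := hS k.val (by omega)
    rw [Finset.sum_range_succ, Finset.sum_range_succ] at e1
    have hBk : extFn (n - 1) B k.val = extFn (n - 1) B' k.val := by
      linear_combination e1 - e2
    rwa [extFn, extFn, dif_pos k.isLt, dif_pos k.isLt] at hBk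
  simp only [Prod.mk.injEq]
  exact ⟨hA, hB, hs, hw, ht⟩

lemma addChar_map_sum {ι : Type*} (ψ : AddChar F ℂ) (s : Finset ι) (f : ι → F) :
    ψ (∑ i ∈ s, f i) = ∏ i ∈ s, ψ (f i) := by
  classical
  induction s using Finset.cons_induction with
  | empty => simp
  | cons i s hi ih => rw [Finset.sum_cons, Finset.prod_cons, AddChar.map_add_eq_mul, ih]

end Aux

set_option maxHeartbeats 1000000 in
/-- `Σ_{x ∈ 𝔽_q^{2n}} Σ_{x₀ ∈ 𝔽_q} ψ(Q_n(x) + (1/2)x₀²) = q^{n+1}`, i.e.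
the normalized Gauss sum of the combined `(2n+1)`-dimensional form arising from the
affine generic stratum of the odd special orthogonal group `SO_{2n+1}` equals `1`. -/
theorem gauss_sum_odd_orthogonal_eq
    (F : Type) [Field F] [Fintype F]
    (hodd : Odd (Fintype.card F))
    (ψ : AddChar F ℂ) (hψ : ψ ≠ 1)
    (n : ℕ) (hn : 2 ≤ n) :
    ∑ x : Fin (2 * n) → F, ∑ x₀ : F, ψ (hSO n x x + (2 : F)⁻¹ * x₀ ^ 2)
      = (Fintype.card F : ℂ) ^ (n + 1) := by
  classical
  -- characteristic is not 2
  have h2 : (2 : F) ≠ 0 := by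
    intro hc
    have hp : (ringChar F).Prime := CharP.char_is_prime F (ringChar F)
    have hdvd : ringChar F ∣ 2 := by
      rw [← ringChar.spec]
      exact_mod_cast hc
    have hchar : ringChar F = 2 := (Nat.prime_dvd_prime_iff_eq hp Nat.prime_two).mp hdvd
    have := FiniteField.even_card_of_char_two hchar
    obtain ⟨m, hm⟩ := hodd
    omega
  have h2i : (2 : F) * (2 : F)⁻¹ = 1 := mul_inv_cancel₀ h2
  have hprim : ψ.IsPrimitive := AddChar.IsPrimitive.of_ne_one hψ
  set q : ℂ := (Fintype.card F : ℂ) with hq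
  -- sum over t of ψ (c * t)
  have hst : ∀ c : F, ∑ t : F, ψ (c * t) = if c = 0 then q else 0 := by
    intro c
    simp_rw [mul_comm c]
    rw [AddChar.sum_mulShift c hprim]
    split_ifs <;> simp [hq]
  -- combine double sum into a sum over pairs
  have hcomb : (∑ x : Fin (2 * n) → F, ∑ x₀ : F, ψ (hSO n x x + (2 : F)⁻¹ * x₀ ^ 2))
      = ∑ d : (Fin (2 * n) → F) × F, ψ (hSO n d.1 d.1 + (2 : F)⁻¹ * d.2 ^ 2) :=
    (Fintype.sum_prod_type
      (fun d : (Fin (2 * n) → F) × F => ψ (hSO n d.1 d.1 + (2 : F)⁻¹ * d.2 ^ 2))).symm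
  rw [hcomb]
  -- change of variables
  have hbij : Function.Bijective (packFn (F := F) n) := by
    rw [Fintype.bijective_iff_injective_and_card]
    refine ⟨packFn_inj hn h2, ?_⟩
    simp only [Fintype.card_prod, Fintype.card_fun, Fintype.card_fin]
    rw [show 2 * n = (n - 1) + ((n - 1) + 2) by omega]
    ring
  have htrans := Fintype.sum_bijective (packFn (F := F) n) hbij
    (fun p : (Fin (n - 1) → F) × (Fin (n - 1) → F) × F × F × F =>
      ψ ((∑ k : Fin (n - 1), p.1 k * p.2.1 k) + p.2.2.1 * p.2.2.2.2))
    (fun d : (Fin (2 * n) → F) × F => ψ (hSO n d.1 d.1 + (2 : F)⁻¹ * d.2 ^ 2))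
    (by
      rintro ⟨A, B, s, w, t⟩
      simp only [packFn]
      congr 1
      rw [keyQ hn h2]
      have hsum : ∑ k ∈ Finset.range (n - 1), extFn (n - 1) A k * extFn (n - 1) B k
          = ∑ k : Fin (n - 1), A k * B k := by
        rw [Finset.sum_range fun k => extFn (n - 1) A k * extFn (n - 1) B k]
        refine Finset.sum_congr rfl fun k _ => ?_
        rw [extFn, extFn, dif_pos k.isLt, dif_pos k.isLt]
      rw [hsum]
      linear_combination (-(s * t) * (2 * (2 : F)⁻¹ + 1)) * h2i)
  rw [← htrans]
  -- now evaluate the explicit sum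
  simp only [Fintype.sum_prod_type]
  simp only [AddChar.map_add_eq_mul, ← Finset.mul_sum]
  have hin : ∑ s : F, ∑ w : F, ∑ t : F, ψ (s * t) = q ^ 2 := by
    simp_rw [hst]
    simp [Finset.sum_ite_eq', Finset.card_univ]
    ring
  simp only [hin]
  have hAB : ∑ A : Fin (n - 1) → F, ∑ B : Fin (n - 1) → F, ψ (∑ k, A k * B k)
      = q ^ (n - 1) := by
    have hmap : ∀ A B : Fin (n - 1) → F,
        ψ (∑ k, A k * B k) = ∏ k, ψ (A k * B k) := fun A B =>
      addChar_map_sum ψ Finset.univ fun k => A k * B k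
    simp_rw [hmap]
    have hswap : ∀ A : Fin (n - 1) → F,
        ∑ B : Fin (n - 1) → F, ∏ k, ψ (A k * B k) = ∏ k : Fin (n - 1), ∑ c : F, ψ (A k * c) :=
      fun A => (Fintype.prod_sum fun k c => ψ (A k * c)).symm
    simp_rw [hswap, hst]
    have hprod : ∀ A : Fin (n - 1) → F,
        (∏ k : Fin (n - 1), if A k = 0 then q else 0)
          = if A = 0 then q ^ (n - 1) else 0 := by
      intro A
      by_cases hA : A = 0
      · simp [hA, Finset.prod_const, Finset.card_univ]
      · rw [if_neg hA]
        obtain ⟨k, hk⟩ : ∃ k, A k ≠ 0 := by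
          by_contra hc
          push_neg at hc
          exact hA (funext fun k => hc k)
        exact Finset.prod_eq_zero (Finset.mem_univ k) (by rw [if_neg hk])
    simp_rw [hprod]
    simp [Finset.sum_ite_eq']
  simp only [← Finset.sum_mul]
  rw [hAB, ← pow_add]
  congr 1
  omega
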